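/- arXiv:1308.1498 — 2 statements merged into one kernel-verified Lean document; each statement's English description precedes it below -/
import Mathlib

section
/- If (π_φ, H_φ, J_φ, V_φ) satisfies φ(g) = V_φ*π_φ(g)V_φ, [π_φ(G)V_φH] = H_φ, and V_φ*π_φ(g)*π_φ(g')V_φ = V_φ*π_φ(α(g⁻¹)g')V_φ for all g,g' (Heo's minimal Naimark–KSGNS dilation), then with W = J_φ V_φ the quadruple (π_φ, H_φ, J_φ, W) also satisfies all three conditions: φ(g) = W*π_φ(g)W, [π_φ(G)WH] = H_φ, and W*π_φ(g)*π_φ(g')W = W*π_φ(α(g⁻¹)g')W. -/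
open scoped ComplexOrder

noncomputable section

def IsInvolution (G : Type*) [Group G] (α : G → G) : Prop :=
  (∀ g, α (α g) = g) ∧ α 1 = 1 ∧ ∀ g : G, α g⁻¹ = (α g)⁻¹

def IsAlphaCP {G : Type*} [Group G] (α : G → G)
    {H : Type*} [NormedAddCommGroup H] [InnerProductSpace ℂ H] [CompleteSpace H]
    (φ : G → H →L[ℂ] H) : Prop :=
  (∀ g₁ g₂ : G, φ (α g₁ * α g₂) = φ (α (g₁ * g₂)) ∧ φ (α (g₁ * g₂)) = φ (g₁ * g₂)) ∧
  (∀ (n : ℕ) (g : Fin n → G) (ξ : Fin n → H),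
    0 ≤ ∑ i, ∑ j, (inner ℂ (φ ((α (g i))⁻¹ * g j) (ξ j)) (ξ i) : ℂ)) ∧
  (∃ K > (0 : ℝ), ∀ (n : ℕ) (g : Fin n → G) (ξ : Fin n → H),
    ∑ i, ∑ j, (inner ℂ (((ContinuousLinearMap.adjoint (φ (g i))) ∘L φ (g j)) (ξ j)) (ξ i) : ℂ) ≤
      (K : ℂ) * ∑ i, ∑ j, (inner ℂ (φ ((α (g i))⁻¹ * g j) (ξ j)) (ξ i) : ℂ)) ∧
  (∀ g : G, ∃ M > (0 : ℝ), ∀ (n : ℕ) (gs : Fin n → G) (ξ : Fin n → H),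
    ∑ i, ∑ j, (inner ℂ (φ ((α (g * gs i))⁻¹ * (g * gs j)) (ξ j)) (ξ i) : ℂ) ≤
      (M : ℂ) * ∑ i, ∑ j, (inner ℂ (φ ((α (gs i))⁻¹ * gs j) (ξ j)) (ξ i) : ℂ))

/-!
Minimality of `V` forces `π(h)* V = π(α h⁻¹) V`: the adjoints of both sides agree on the dense
set `π(G) V H`, because `V* π(h) π(g) V = V* π(h g) V = V* π(α h⁻¹)* π(g) V` by the third dilation
identity. Together with `J π(g) J = π(g⁻¹)*` this gives `J π(g) J V = π(α g) V`, so passing from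
`V` to `J V` amounts to reindexing the group by `α`, under which `φ` is invariant; the bijection
`J` carries the dense span `[π(G) V H]` onto `[π(G) J V H]`.
-/

open ContinuousLinearMap

lemma topologicalClosure_span_comp_eq_top {G H K : Type*} {α : G → G}
    [NormedAddCommGroup H] [NormedSpace ℂ H] [NormedAddCommGroup K] [NormedSpace ℂ K]
    {π : G → K →L[ℂ] K} {V : H →L[ℂ] K} {J : K →L[ℂ] K}
    (hJinv : J ∘L J = 1) (hαα : ∀ g, α (α g) = g)
    (hJπ : ∀ g ξ, J (π g (V ξ)) = π (α g) (J (V ξ)))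
    (hb : (Submodule.span ℂ {x : K | ∃ g ξ, x = π g (V ξ)}).topologicalClosure = ⊤) :
    (Submodule.span ℂ {x : K | ∃ g ξ, x = π g ((J ∘L V) ξ)}).topologicalClosure = ⊤ := by
  have hJJ : ∀ x, J (J x) = x := fun x => congr($hJinv x)
  have hset : {x : K | ∃ g ξ, x = π g ((J ∘L V) ξ)} = J '' {x | ∃ g ξ, x = π g (V ξ)} := by
    ext x
    constructor
    · rintro ⟨g, ξ, rfl⟩
      exact ⟨π (α g) (V ξ), ⟨α g, ξ, rfl⟩, by rw [hJπ, hαα, comp_apply]⟩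
    · rintro ⟨_, ⟨g, ξ, rfl⟩, rfl⟩
      exact ⟨α g, ξ, hJπ g ξ⟩
  have hJsurj : Function.Surjective J := fun x => ⟨J x, hJJ x⟩
  have hdense := (hJsurj.denseRange (f := J)).topologicalClosure_map_submodule hb
  rw [Submodule.map_span] at hdense
  rwa [hset]

section

variable {G : Type*} [Group G] {α : G → G}

lemma IsInvolution.apply_inv_apply_inv (hα : IsInvolution G α) (g : G) : α (α g)⁻¹ = g⁻¹ := by
  rw [← hα.2.2, hα.1]

variable {H : Type*} [NormedAddCommGroup H] [InnerProductSpace ℂ H] [CompleteSpace H]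
  {φ : G → H →L[ℂ] H}

lemma IsAlphaCP.apply_alpha (hφ : IsAlphaCP α φ) (g : G) : φ (α g) = φ g := by
  simpa using (hφ.1 g 1).2

lemma IsAlphaCP.apply_mul_alpha (hφ : IsAlphaCP α φ) (hαα : ∀ g, α (α g) = g) (g g' : G) :
    φ (g * α g') = φ (α g * g') := by
  obtain ⟨h₁, h₂⟩ := hφ.1 g (α g')
  rw [hαα] at h₁
  rw [h₁, h₂]

variable {K : Type*} [NormedAddCommGroup K] [InnerProductSpace ℂ K] [CompleteSpace K]
  {π : G → K →L[ℂ] K} {V : H →L[ℂ] K}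

lemma adjoint_comp_eq_comp_of_minimal (hα : IsInvolution G α)
    (hπmul : ∀ g g', π (g * g') = π g ∘L π g')
    (hb : (Submodule.span ℂ {x : K | ∃ g ξ, x = π g (V ξ)}).topologicalClosure = ⊤)
    (hc : ∀ g g' : G, adjoint V ∘L adjoint (π g) ∘L π g' ∘L V =
        adjoint V ∘L π (α g⁻¹ * g') ∘L V) (h : G) :
    adjoint (π h) ∘L V = π (α h⁻¹) ∘L V := by
  apply (adjoint (𝕜 := ℂ) (E := H) (F := K)).injective
  simp only [adjoint_comp, adjoint_adjoint]
  refine ext_on (Submodule.dense_iff_topologicalClosure_eq_top.mpr hb) ?_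
  rintro _ ⟨g, ξ, rfl⟩
  have hcomp := congr($(hc (α h⁻¹) g) ξ)
  simp only [comp_apply, hα.apply_inv_apply_inv, inv_inv] at hcomp ⊢
  rw [hcomp, hπmul, comp_apply]

variable {J : K →L[ℂ] K}

lemma comp_comp_eq_adjoint_inv (hJinv : J ∘L J = 1)
    (hπJ : ∀ g : G, π g⁻¹ = J ∘L adjoint (π g) ∘L J) (g : G) :
    J ∘L π g ∘L J = adjoint (π g⁻¹) := by
  conv_lhs => rw [← inv_inv g, hπJ g⁻¹]
  simp only [← comp_assoc, hJinv]
  rw [comp_assoc, hJinv, one_def, id_comp, comp_id]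

end

open ContinuousLinearMap in
theorem heo_dilation_JV_general {G : Type*} [Group G] (α : G → G)
    {H : Type*} [NormedAddCommGroup H] [InnerProductSpace ℂ H] [CompleteSpace H]
    {K : Type*} [NormedAddCommGroup K] [InnerProductSpace ℂ K] [CompleteSpace K]
    (hα : IsInvolution G α)
    (φ : G → H →L[ℂ] H) (hφ : IsAlphaCP α φ)
    (J : K →L[ℂ] K) (hJsa : adjoint J = J) (hJinv : J ∘L J = 1)
    (π : G → K →L[ℂ] K) (hπmul : ∀ g g', π (g * g') = π g ∘L π g')
    (hπJ : ∀ g : G, π g⁻¹ = J ∘L adjoint (π g) ∘L J)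
    (V : H →L[ℂ] K)
    (ha : ∀ g : G, φ g = adjoint V ∘L π g ∘L V)
    (hb : (Submodule.span ℂ {x : K | ∃ g ξ, x = π g (V ξ)}).topologicalClosure = ⊤)
    (hc : ∀ g g' : G, adjoint V ∘L adjoint (π g) ∘L π g' ∘L V =
        adjoint V ∘L π (α g⁻¹ * g') ∘L V) :
    (∀ g : G, φ g = adjoint (J ∘L V) ∘L π g ∘L (J ∘L V)) ∧
    (Submodule.span ℂ {x : K | ∃ g ξ, x = π g ((J ∘L V) ξ)}).topologicalClosure = ⊤ ∧
    (∀ g g' : G, adjoint (J ∘L V) ∘L adjoint (π g) ∘L π g' ∘L (J ∘L V) =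
        adjoint (J ∘L V) ∘L π (α g⁻¹ * g') ∘L (J ∘L V)) := by
  have hJV : ∀ g, J ∘L π g ∘L J ∘L V = π (α g) ∘L V := fun g => by
    rw [← comp_assoc, ← comp_assoc, comp_assoc J, comp_comp_eq_adjoint_inv hJinv hπJ,
      adjoint_comp_eq_comp_of_minimal hα hπmul hb hc, inv_inv]
  have hW : adjoint (J ∘L V) = adjoint V ∘L J := by rw [adjoint_comp, hJsa]
  have hφW : ∀ g, φ g = adjoint (J ∘L V) ∘L π g ∘L (J ∘L V) := fun g => by
    rw [hW, comp_assoc, hJV, ← ha, hφ.apply_alpha]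
  refine ⟨hφW, ?_, fun g g' => ?_⟩
  · refine topologicalClosure_span_comp_eq_top hJinv hα.1 (fun g ξ => ?_) hb
    have h := congr($(hJV (α g)) ξ)
    simp only [comp_apply, hα.1] at h
    rw [← h, ← comp_apply J J, hJinv, one_apply_eq_self]
  · calc adjoint (J ∘L V) ∘L adjoint (π g) ∘L π g' ∘L (J ∘L V)
        = adjoint V ∘L (J ∘L adjoint (π g) ∘L J) ∘L (J ∘L π g' ∘L J ∘L V) := by
          simp only [hW, comp_assoc]
          rw [← comp_assoc J J, hJinv, one_def, id_comp]
      _ = adjoint V ∘L π g⁻¹ ∘L π (α g') ∘L V := by rw [← hπJ, hJV]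
      _ = φ (g⁻¹ * α g') := by rw [ha, hπmul, comp_assoc]
      _ = φ (α g⁻¹ * g') := hφ.apply_mul_alpha hα.1 _ _
      _ = _ := hφW _

open ContinuousLinearMap in
theorem heo_dilation_JV {G : Type*} [Group G] (α : G → G)
    {H : Type*} [NormedAddCommGroup H] [InnerProductSpace ℂ H] [CompleteSpace H]
    {K : Type*} [NormedAddCommGroup K] [InnerProductSpace ℂ K] [CompleteSpace K]
    (hα : IsInvolution G α)
    (φ : G → H →L[ℂ] H) (hφ : IsAlphaCP α φ)
    (J : K →L[ℂ] K) (hJsa : adjoint J = J) (hJinv : J ∘L J = 1)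
    (π : G → K →L[ℂ] K) (hπ1 : π 1 = 1) (hπmul : ∀ g g', π (g * g') = π g ∘L π g')
    (hπJ : ∀ g : G, π g⁻¹ = J ∘L adjoint (π g) ∘L J)
    (V : H →L[ℂ] K)
    (ha : ∀ g : G, φ g = adjoint V ∘L π g ∘L V)
    (hb : (Submodule.span ℂ {x : K | ∃ g ξ, x = π g (V ξ)}).topologicalClosure = ⊤)
    (hc : ∀ g g' : G, adjoint V ∘L adjoint (π g) ∘L π g' ∘L V =
        adjoint V ∘L π (α g⁻¹ * g') ∘L V) :
    (∀ g : G, φ g = adjoint (J ∘L V) ∘L π g ∘L (J ∘L V)) ∧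
    (Submodule.span ℂ {x : K | ∃ g ξ, x = π g ((J ∘L V) ξ)}).topologicalClosure = ⊤ ∧
    (∀ g g' : G, adjoint (J ∘L V) ∘L adjoint (π g) ∘L π g' ∘L (J ∘L V) =
        adjoint (J ∘L V) ∘L π (α g⁻¹ * g') ∘L (J ∘L V)) :=
  heo_dilation_JV_general α hα φ hφ J hJsa hJinv π hπmul hπJ V ha hb hc
end
end

section
/- (Radon–Nikodym, direct part) Let φ : G → L(H) be α-completely positive with minimal Stinespring construction (π_φ, (H_φ, J_φ), V_φ). Let T ∈ L(H_φ) be positive, commuting with π_φ(g) for all g ∈ G, and with T J_φ = J_φ T. Then the map φ_T : G → L(H) defined by φ_T(g) = V_φ* T π_φ(g) V_φ is α-completely positive. -/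
open scoped ComplexOrder

noncomputable section

structure KreinDilation (G : Type*) [Group G] (α : G → G)
    (H : Type*) [NormedAddCommGroup H] [InnerProductSpace ℂ H] [CompleteSpace H]
    (φ : G → H →L[ℂ] H) where
  K : Type
  [nK : NormedAddCommGroup K]
  [iK : InnerProductSpace ℂ K]
  [cK : CompleteSpace K]
  J : K →L[ℂ] K
  rep : G → K →L[ℂ] K
  V : H →L[ℂ] K
  J_sa : ContinuousLinearMap.adjoint J = J
  J_inv : J ∘L J = 1
  rep_one : rep 1 = 1
  rep_mul : ∀ g g', rep (g * g') = rep g ∘L rep g'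
  rep_inv : ∀ g, rep g⁻¹ = J ∘L (ContinuousLinearMap.adjoint (rep g)) ∘L J
  eq : ∀ g, φ g = (ContinuousLinearMap.adjoint V) ∘L rep g ∘L V
  minimal : (Submodule.span ℂ {x : K | ∃ g ξ, x = rep g (V ξ)}).topologicalClosure = ⊤
  commJ : ∀ g, J ∘L rep g ∘L V = rep (α g) ∘L V

attribute [instance] KreinDilation.nK KreinDilation.iK KreinDilation.cK

/-! Write `φ_T = D.compress T` and `π = D.rep`. For `s = ∑ⱼ π(gⱼ) V ξⱼ` every Gram sum of `φ_T`
is the quadratic form of `T`: `∑ᵢⱼ ⟪φ_T (α(gᵢ)⁻¹ gⱼ) ξⱼ, ξᵢ⟫ = ⟪T s, s⟫`, because `π((α a)⁻¹) = J π(α a)* J` and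
`J π(a) V = π(α a) V`. Positivity is that of `T`; both bounds follow from `⟪T s, s⟫ = ‖√T s‖²`,
where `√T` commutes with every `π(g)` since `T` does. The symmetry conditions come from moving `J`
through `T` and absorbing it into `V = J V`. -/

open ContinuousLinearMap
open scoped InnerProductSpace

lemma Complex.ofReal_le_ofReal_add_one_mul {a b c : ℝ} (hb : 0 ≤ b) (h : a ≤ c * b) :
    (a : ℂ) ≤ ((c + 1 : ℝ) : ℂ) * (b : ℂ) := by
  rw [← Complex.ofReal_mul, Complex.real_le_real]
  linarith

lemma Commute.apply_apply {R E : Type*} [Semiring R] [TopologicalSpace E] [AddCommMonoid E]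
    [Module R E] {A B : E →L[R] E} (h : Commute A B) (x : E) : A (B x) = B (A x) :=
  DFunLike.congr_fun h.eq x

lemma sum_inner_adjoint_comp_apply {ι E F : Type*} [Fintype ι]
    [NormedAddCommGroup E] [InnerProductSpace ℂ E] [CompleteSpace E]
    [NormedAddCommGroup F] [InnerProductSpace ℂ F] [CompleteSpace F]
    (A : ι → E →L[ℂ] F) (ξ : ι → E) :
    ∑ i, ∑ j, ⟪(adjoint (A i) ∘L A j) (ξ j), ξ i⟫_ℂ = ((‖∑ i, A i (ξ i)‖ ^ 2 : ℝ) : ℂ) := by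
  calc ∑ i, ∑ j, ⟪(adjoint (A i) ∘L A j) (ξ j), ξ i⟫_ℂ
      = ⟪∑ j, A j (ξ j), ∑ i, A i (ξ i)⟫_ℂ := by
        simp only [sum_inner, inner_sum, comp_apply, adjoint_inner_left]
    _ = _ := by rw [inner_self_eq_norm_sq_to_K]; norm_cast

section SqrtOfPositive

variable {E : Type*} [NormedAddCommGroup E] [InnerProductSpace ℂ E] [CompleteSpace E]
  {T : E →L[ℂ] E}

lemma inner_apply_self_eq_norm_sqrt_apply_sq (hT : 0 ≤ T) (x : E) :
    ⟪T x, x⟫_ℂ = ((‖CFC.sqrt T x‖ ^ 2 : ℝ) : ℂ) := by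
  have hR : IsSelfAdjoint (CFC.sqrt T) := .of_nonneg (CFC.sqrt_nonneg T)
  conv_lhs => rw [← CFC.sqrt_mul_sqrt_self T hT, mul_apply_eq_comp, ← hR.adjoint_eq,
    adjoint_inner_left, hR.adjoint_eq, inner_self_eq_norm_sq_to_K]
  norm_cast

lemma norm_apply_sq_le_norm_mul_norm_sqrt_apply_sq (hT : 0 ≤ T) (x : E) :
    ‖T x‖ ^ 2 ≤ ‖T‖ * ‖CFC.sqrt T x‖ ^ 2 := by
  have hR : IsSelfAdjoint (CFC.sqrt T) := .of_nonneg (CFC.sqrt_nonneg T)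
  have hnorm : ‖T‖ = ‖CFC.sqrt T‖ ^ 2 := by
    rw [sq, ← CStarRing.norm_star_mul_self, hR.star_eq, CFC.sqrt_mul_sqrt_self T hT]
  have happly : ‖T x‖ ≤ ‖CFC.sqrt T‖ * ‖CFC.sqrt T x‖ := by
    conv_lhs => rw [← CFC.sqrt_mul_sqrt_self T hT, mul_apply_eq_comp]
    exact le_opNorm _ _
  rw [hnorm, ← mul_pow]
  gcongr

lemma norm_apply_apply_sq_le {F : Type*} [NormedAddCommGroup F] [NormedSpace ℂ F]
    (hT : 0 ≤ T) (A : E →L[ℂ] F) (x : E) :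
    ‖A (T x)‖ ^ 2 ≤ ‖A‖ ^ 2 * ‖T‖ * ‖CFC.sqrt T x‖ ^ 2 := by
  calc ‖A (T x)‖ ^ 2 ≤ (‖A‖ * ‖T x‖) ^ 2 := by gcongr; exact le_opNorm _ _
    _ ≤ ‖A‖ ^ 2 * (‖T‖ * ‖CFC.sqrt T x‖ ^ 2) := by
      rw [mul_pow]; gcongr; exact norm_apply_sq_le_norm_mul_norm_sqrt_apply_sq hT x
    _ = ‖A‖ ^ 2 * ‖T‖ * ‖CFC.sqrt T x‖ ^ 2 := by ring

lemma norm_sqrt_apply_le_of_commute {S : E →L[ℂ] E} (hS : Commute T S) (x : E) :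
    ‖CFC.sqrt T (S x)‖ ≤ ‖S‖ * ‖CFC.sqrt T x‖ := by
  have hRS : Commute (CFC.sqrt T) S := by
    rw [CFC.sqrt_eq_cfc]
    exact hS.cfc_nnreal _
  rw [← mul_apply_eq_comp, hRS.eq, mul_apply_eq_comp]
  exact le_opNorm _ _

end SqrtOfPositive

namespace KreinDilation

variable {G : Type*} [Group G] {α : G → G}
  {H : Type*} [NormedAddCommGroup H] [InnerProductSpace ℂ H] [CompleteSpace H]
  {φ : G → H →L[ℂ] H} (D : KreinDilation G α H φ)

def compress (T : D.K →L[ℂ] D.K) (g : G) : H →L[ℂ] H :=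
  adjoint D.V ∘L T ∘L D.rep g ∘L D.V

def gramVector {n : ℕ} (g : Fin n → G) (ξ : Fin n → H) : D.K :=
  ∑ i, D.rep (g i) (D.V (ξ i))

lemma J_J_apply (x : D.K) : D.J (D.J x) = x :=
  DFunLike.congr_fun D.J_inv x

lemma inner_J_left (u v : D.K) : ⟪D.J u, v⟫_ℂ = ⟪u, D.J v⟫_ℂ := by
  rw [← adjoint_inner_right, D.J_sa]

lemma rep_mul_apply (g g' : G) (x : D.K) : D.rep (g * g') x = D.rep g (D.rep g' x) := by
  rw [D.rep_mul]; rfl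

lemma rep_inv_apply (g : G) (x : D.K) : D.rep g⁻¹ x = D.J (adjoint (D.rep g) (D.J x)) := by
  rw [D.rep_inv]; rfl

lemma adjoint_rep_apply (g : G) (x : D.K) : adjoint (D.rep g) x = D.J (D.rep g⁻¹ (D.J x)) := by
  rw [rep_inv_apply, J_J_apply, J_J_apply]

lemma J_rep_V_apply (g : G) (ξ : H) : D.J (D.rep g (D.V ξ)) = D.rep (α g) (D.V ξ) :=
  DFunLike.congr_fun (D.commJ g) ξ

lemma J_V_apply (hα1 : α 1 = 1) (ξ : H) : D.J (D.V ξ) = D.V ξ := by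
  simpa [D.rep_one, hα1] using D.J_rep_V_apply 1 ξ

lemma adjoint_V_J_apply (hα1 : α 1 = 1) (x : D.K) : adjoint D.V (D.J x) = adjoint D.V x := by
  refine ext_inner_right ℂ fun ξ => ?_
  rw [adjoint_inner_left, adjoint_inner_left, inner_J_left, D.J_V_apply hα1]

lemma adjoint_V_rep_alpha_J_apply (hα1 : α 1 = 1) {a : G} (hαinv : α a⁻¹ = (α a)⁻¹) (y : D.K) :
    adjoint D.V (D.rep (α a) (D.J y)) = adjoint D.V (D.rep a y) := by
  refine ext_inner_right ℂ fun ξ => ?_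
  rw [adjoint_inner_left, adjoint_inner_left, ← adjoint_inner_right (D.rep (α a)),
    ← adjoint_inner_right (D.rep a), adjoint_rep_apply, adjoint_rep_apply, D.J_V_apply hα1,
    ← hαinv, ← J_rep_V_apply, J_J_apply, ← inner_J_left]

variable {T : D.K →L[ℂ] D.K}

lemma compress_alpha (hα1 : α 1 = 1) (hTJ : Commute T D.J) (g : G) :
    D.compress T (α g) = D.compress T g := by
  ext ξ
  simp only [compress, coe_comp, Function.comp_apply]
  rw [← J_rep_V_apply, hTJ.apply_apply, adjoint_V_J_apply D hα1]

lemma compress_alpha_mul_alpha (hα1 : α 1 = 1) {g₁ : G} (hαinv : α g₁⁻¹ = (α g₁)⁻¹)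
    (hTrep : ∀ g, Commute T (D.rep g)) (hTJ : Commute T D.J) (g₂ : G) :
    D.compress T (α g₁ * α g₂) = D.compress T (g₁ * g₂) := by
  ext ξ
  simp only [compress, coe_comp, Function.comp_apply]
  rw [rep_mul_apply, rep_mul_apply, ← J_rep_V_apply, (hTrep _).apply_apply, hTJ.apply_apply,
    adjoint_V_rep_alpha_J_apply D hα1 hαinv, ← (hTrep _).apply_apply]

lemma inner_compress_apply (hα1 : α 1 = 1) {a : G} (hT : Commute T (D.rep (α a)⁻¹)) (b : G)
    (ξ η : H) :
    ⟪D.compress T ((α a)⁻¹ * b) ξ, η⟫_ℂ = ⟪T (D.rep b (D.V ξ)), D.rep a (D.V η)⟫_ℂ := by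
  simp only [compress, coe_comp, Function.comp_apply]
  rw [adjoint_inner_left, rep_mul_apply, hT.apply_apply, rep_inv_apply, inner_J_left,
    D.J_V_apply hα1, adjoint_inner_left, ← J_rep_V_apply, inner_J_left, J_J_apply]

lemma sum_inner_compress_apply (hα1 : α 1 = 1) (hT : ∀ g, Commute T (D.rep g)) {n : ℕ}
    (g : Fin n → G) (ξ : Fin n → H) :
    ∑ i, ∑ j, ⟪D.compress T ((α (g i))⁻¹ * g j) (ξ j), ξ i⟫_ℂ
      = ⟪T (D.gramVector g ξ), D.gramVector g ξ⟫_ℂ := by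
  simp only [D.inner_compress_apply hα1 (hT _), gramVector, map_sum, sum_inner, inner_sum]

lemma sum_compress_apply {n : ℕ} (g : Fin n → G) (ξ : Fin n → H) :
    ∑ i, D.compress T (g i) (ξ i) = adjoint D.V (T (D.gramVector g ξ)) := by
  simp only [gramVector, map_sum, compress, coe_comp, Function.comp_apply]

lemma rep_gramVector (g : G) {n : ℕ} (gs : Fin n → G) (ξ : Fin n → H) :
    D.rep g (D.gramVector gs ξ) = D.gramVector (fun i => g * gs i) ξ := by
  simp only [gramVector, map_sum, rep_mul_apply]

end KreinDilation

open ContinuousLinearMap in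
theorem radon_nikodym_direct_general {G : Type*} [Group G] (α : G → G)
    {H : Type*} [NormedAddCommGroup H] [InnerProductSpace ℂ H] [CompleteSpace H]
    (φ : G → H →L[ℂ] H) (hα : IsInvolution G α)
    (D : KreinDilation G α H φ)
    (T : D.K →L[ℂ] D.K) (hT : T.IsPositive)
    (hTcomm : ∀ g : G, T ∘L D.rep g = D.rep g ∘L T)
    (hTJ : T ∘L D.J = D.J ∘L T) :
    IsAlphaCP α (fun g => adjoint D.V ∘L T ∘L D.rep g ∘L D.V) := by
  show IsAlphaCP α (D.compress T)
  obtain ⟨-, hα1, hαinv⟩ := hα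
  have hT₀ : 0 ≤ T := (nonneg_iff_isPositive T).mpr hT
  have hgram (n : ℕ) := D.sum_inner_compress_apply hα1 hTcomm (n := n)
  refine ⟨fun g₁ g₂ => ⟨?_, D.compress_alpha hα1 hTJ _⟩, fun n g ξ => ?_,
    ⟨‖D.V‖ ^ 2 * ‖T‖ + 1, by positivity, fun n g ξ => ?_⟩,
    fun g => ⟨‖D.rep g‖ ^ 2 + 1, by positivity, fun n gs ξ => ?_⟩⟩
  · rw [D.compress_alpha_mul_alpha hα1 (hαinv g₁) hTcomm hTJ, D.compress_alpha hα1 hTJ]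
  · rw [hgram]
    exact hT.inner_nonneg_left _
  · rw [hgram, sum_inner_adjoint_comp_apply, D.sum_compress_apply,
      inner_apply_self_eq_norm_sqrt_apply_sq hT₀]
    refine Complex.ofReal_le_ofReal_add_one_mul (by positivity) ?_
    simpa only [LinearIsometryEquiv.norm_map] using norm_apply_apply_sq_le hT₀ (adjoint D.V) _
  · rw [hgram, hgram, ← D.rep_gramVector, inner_apply_self_eq_norm_sqrt_apply_sq hT₀,
      inner_apply_self_eq_norm_sqrt_apply_sq hT₀]
    refine Complex.ofReal_le_ofReal_add_one_mul (by positivity) ?_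
    rw [← mul_pow]
    gcongr
    exact norm_sqrt_apply_le_of_commute (hTcomm g) _

open ContinuousLinearMap in
theorem radon_nikodym_direct {G : Type*} [Group G] (α : G → G)
    {H : Type*} [NormedAddCommGroup H] [InnerProductSpace ℂ H] [CompleteSpace H]
    (φ : G → H →L[ℂ] H) (hα : IsInvolution G α) (hφ : IsAlphaCP α φ)
    (D : KreinDilation G α H φ)
    (T : D.K →L[ℂ] D.K) (hT : T.IsPositive)
    (hTcomm : ∀ g : G, T ∘L D.rep g = D.rep g ∘L T)
    (hTJ : T ∘L D.J = D.J ∘L T) :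
    IsAlphaCP α (fun g => adjoint D.V ∘L T ∘L D.rep g ∘L D.V) :=
  radon_nikodym_direct_general α φ hα D T hT hTcomm hTJ
end
end
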